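/- (Reduction lemma for vector fields, low range.) Let ℓ ≥ 1 and 1 ≤ r ≤ ℓ, and let Y be a real-valued function of class C^{ℓ+r} on an interval [0,ε) whose Taylor expansion of order ℓ+r at 0 starts with α·x^{ℓ+1} for some α > 0; that is, Y^{(j)}(0) = 0 for 0 ≤ j ≤ ℓ and Y^{(ℓ+1)}(0) = (ℓ+1)!·α > 0. Then there exists a polynomial map h : ℝ → ℝ with h(0) = 0 and h'(0) > 0 such that h'(x)·Y(x) = (h(x))^{ℓ+1} + o(x^{ℓ+r}) as x → 0⁺. (The vector field Y is smoothly — indeed polynomially — conjugate to a vector field of the form x ↦ x^{ℓ+1} + o(x^{ℓ+r}).) -/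

import Mathlib

/-!
Replace `Y` by its Taylor polynomial `x ^ (ℓ + 1) * Q x` with `Q 0 = α`; by Taylor's theorem this
costs `o(x ^ (ℓ + r))`. For `h = x * g x` one has
`h' * x ^ (ℓ + 1) * Q - h ^ (ℓ + 1) = x ^ (ℓ + 1) * ((g + x * g') * Q - g ^ (ℓ + 1))`,
so it suffices that the bracket vanish to order `r` at `0`. Taking `g 0 = α ^ (1 / ℓ)` kills its
constant term, and adding `t * x ^ k` to `g` changes its `x ^ k`-coefficient by `t * α * (k - ℓ)`
without touching lower ones, so the coefficients can be killed one by one as long as `k < ℓ`.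
-/

open Polynomial Filter Topology Asymptotics Finset
open scoped Nat

section Algebra

variable {R K : Type*} [CommRing R] [Field K] [CharZero K]

noncomputable def conjugationDefect (ℓ : ℕ) (Q g : R[X]) : R[X] :=
  (g + X * derivative g) * Q - g ^ (ℓ + 1)

theorem X_pow_mul_conjugationDefect (ℓ : ℕ) (Q g : R[X]) :
    X ^ (ℓ + 1) * conjugationDefect ℓ Q g =
      derivative (X * g) * (X ^ (ℓ + 1) * Q) - (X * g) ^ (ℓ + 1) := by
  rw [conjugationDefect, derivative_mul, derivative_X]
  ring

theorem exists_X_pow_succ_dvd_conjugationDefect {ℓ k : ℕ} {Q g : K[X]} (hk : 1 ≤ k)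
    (hkℓ : k ≠ ℓ) (hQ : Q.coeff 0 ≠ 0) (hg : g.coeff 0 ^ ℓ = Q.coeff 0)
    (hdvd : X ^ k ∣ conjugationDefect ℓ Q g) :
    ∃ t : K, X ^ (k + 1) ∣ conjugationDefect ℓ Q (g + C t * X ^ k) := by
  obtain ⟨W, hW⟩ := hdvd
  have hden : Q.coeff 0 * ((ℓ : K) - k) ≠ 0 :=
    mul_ne_zero hQ (sub_ne_zero.2 (Nat.cast_injective.ne hkℓ.symm))
  set t := W.coeff 0 / (Q.coeff 0 * ((ℓ : K) - k))
  set u : K[X] := C t * X ^ k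
  obtain ⟨b, hb⟩ := binomExpansion (X ^ (ℓ + 1)) g u
  simp only [eval_pow, eval_X, derivative_X_pow, eval_mul, eval_C, add_tsub_cancel_right,
    Nat.cast_add, Nat.cast_one] at hb
  have hu : u + X * derivative u = C (t * (k + 1)) * X ^ k := by
    simp only [u, derivative_C_mul_X_pow, C_mul, C_add, C_1, map_natCast]
    rcases k with _ | k
    · omega
    · simp only [add_tsub_cancel_right, Nat.cast_add, Nat.cast_one]; ring
  have hsplit : conjugationDefect ℓ Q (g + u) =
      X ^ k * (W + C (t * (k + 1)) * Q - C (((ℓ : K) + 1) * t) * g ^ ℓ) - b * u ^ 2 := by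
    have : conjugationDefect ℓ Q (g + u) = conjugationDefect ℓ Q g
        + (u + X * derivative u) * Q - ((g + u) ^ (ℓ + 1) - g ^ (ℓ + 1)) := by
      simp only [conjugationDefect, derivative_add]; ring
    rw [this, hW, hu, hb]
    simp only [u, C_mul, C_add, map_natCast, C_1]
    ring
  refine ⟨t, hsplit ▸ dvd_sub ?_ ?_⟩
  · rw [pow_succ]
    refine mul_dvd_mul_left _ (X_dvd_iff.2 ?_)
    have ht : t * (Q.coeff 0 * ((ℓ : K) - k)) = W.coeff 0 := div_mul_cancel₀ _ hden
    have hgℓ : (g ^ ℓ).coeff 0 = Q.coeff 0 := by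
      rw [coeff_zero_eq_eval_zero, eval_pow, ← coeff_zero_eq_eval_zero, hg]
    simp only [coeff_sub, coeff_add, coeff_C_mul, hgℓ]
    linear_combination -ht
  · refine Dvd.dvd.mul_left ?_ _
    simp only [u, mul_pow, ← pow_mul]
    exact Dvd.dvd.mul_left (pow_dvd_pow X (by omega)) _

theorem exists_X_pow_dvd_conjugationDefect {ℓ r : ℕ} {Q : K[X]} {c : K} (hQ : Q.coeff 0 ≠ 0)
    (hc : c ^ ℓ = Q.coeff 0) (hr : 1 ≤ r) (hrℓ : r ≤ ℓ) :
    ∃ g : K[X], g.coeff 0 = c ∧ X ^ r ∣ conjugationDefect ℓ Q g := by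
  induction r, hr using Nat.le_induction with
  | base =>
    refine ⟨C c, coeff_C_zero, ?_⟩
    rw [pow_one, X_dvd_iff, conjugationDefect]
    simp only [derivative_C, mul_zero, add_zero, coeff_sub, coeff_C_mul, ← C_pow, coeff_C_zero,
      ← hc]
    ring
  | succ k hk ih =>
    obtain ⟨g, hg, hdvd⟩ := ih (by omega)
    obtain ⟨t, ht⟩ := exists_X_pow_succ_dvd_conjugationDefect hk (by omega) hQ (hg ▸ hc) hdvd
    refine ⟨g + C t * X ^ k, ?_, ht⟩
    rw [coeff_add, coeff_C_mul_X_pow, if_neg (by omega), add_zero, hg]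

end Algebra

noncomputable def taylorPolyAtZero (f : ℝ → ℝ) (n : ℕ) (s : Set ℝ) : ℝ[X] :=
  ∑ k ∈ range (n + 1), C (iteratedDerivWithin k f s 0 / k !) * X ^ k

theorem taylorPolyAtZero_eval (f : ℝ → ℝ) (n : ℕ) (s : Set ℝ) (x : ℝ) :
    (taylorPolyAtZero f n s).eval x = taylorWithinEval f n s 0 x := by
  simp only [taylorPolyAtZero, taylor_within_apply, eval_finsetSum, eval_mul, eval_C, eval_pow,
    eval_X, sub_zero, smul_eq_mul]
  exact sum_congr rfl fun k _ => by ring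

theorem taylorPolyAtZero_coeff (f : ℝ → ℝ) {n k : ℕ} (s : Set ℝ) (hk : k ≤ n) :
    (taylorPolyAtZero f n s).coeff k = iteratedDerivWithin k f s 0 / k ! := by
  simp only [taylorPolyAtZero, finsetSum_coeff, coeff_C_mul_X_pow]
  rw [sum_ite_eq, if_pos (mem_range.2 (by omega))]

theorem Polynomial.isLittleO_eval_of_X_pow_succ_dvd {P : ℝ[X]} {n : ℕ} (h : X ^ (n + 1) ∣ P) :
    (fun x => P.eval x) =o[𝓝 0] fun x => x ^ n := by
  obtain ⟨W, rfl⟩ := h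
  have hW : Tendsto (fun x => x * W.eval x) (𝓝 0) (𝓝 0) := by
    simpa using tendsto_id.mul (W.continuous.tendsto 0)
  refine (((isLittleO_one_iff ℝ).2 hW).mul_isBigO (isBigO_refl (fun x : ℝ => x ^ n) (𝓝 0))).congr
    (fun x => ?_) (fun x => one_mul _)
  simp only [eval_mul, eval_pow, eval_X]
  ring

/-- Reduction lemma for vector fields (low range `1 ≤ r ≤ ℓ`): a `C^{ℓ+r}` vector field
whose Taylor expansion of order `ℓ+r` at `0` starts with `α·x^{ℓ+1}` (`α > 0`) is
polynomially conjugate to a vector field of the form `x ↦ x^{ℓ+1} + o(x^{ℓ+r})`. -/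
theorem stmt_16 (ℓ r : ℕ) (hℓ : 1 ≤ ℓ) (hr1 : 1 ≤ r) (hrℓ : r ≤ ℓ)
    (ε : ℝ) (hε : 0 < ε) (Y : ℝ → ℝ) (α : ℝ) (hα : 0 < α)
    (hY : ContDiffOn ℝ (ℓ + r : ℕ) Y (Set.Ico 0 ε))
    (hYj : ∀ j, j ≤ ℓ → iteratedDerivWithin j Y (Set.Ico 0 ε) 0 = 0)
    (hYl : iteratedDerivWithin (ℓ + 1) Y (Set.Ico 0 ε) 0 = (Nat.factorial (ℓ + 1) : ℝ) * α) :
    ∃ p : Polynomial ℝ,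
      p.eval 0 = 0 ∧ 0 < p.derivative.eval 0 ∧
      Asymptotics.IsLittleO (nhdsWithin 0 (Set.Ioi 0))
        (fun x : ℝ => p.derivative.eval x * Y x - (p.eval x) ^ (ℓ + 1))
        (fun x : ℝ => x ^ (ℓ + r)) := by
  obtain ⟨Q, hQ⟩ : X ^ (ℓ + 1) ∣ taylorPolyAtZero Y (ℓ + r) (Set.Ico 0 ε) :=
    X_pow_dvd_iff.2 fun d hd => by
      rw [taylorPolyAtZero_coeff Y _ (by omega), hYj d (by omega), zero_div]
  have hQα : Q.coeff 0 = α := by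
    have h := coeff_X_pow_mul Q (ℓ + 1) 0
    rwa [zero_add, ← hQ, taylorPolyAtZero_coeff Y _ (by omega), hYl,
      mul_div_cancel_left₀ _ (by positivity), eq_comm] at h
  obtain ⟨g, hg, hdvd⟩ := exists_X_pow_dvd_conjugationDefect (c := α ^ (ℓ : ℝ)⁻¹) (hQα ▸ hα.ne')
    (by rw [hQα]; exact Real.rpow_inv_natCast_pow hα.le (by omega)) hr1 hrℓ
  refine ⟨X * g, by simp, ?_, ?_⟩
  · simpa [derivative_mul, ← coeff_zero_eq_eval_zero, hg] using Real.rpow_pos_of_pos hα _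
  have hTaylor : (fun x => Y x - (X ^ (ℓ + 1) * Q).eval x) =o[𝓝[>] 0] fun x => x ^ (ℓ + r) := by
    simpa [← hQ, taylorPolyAtZero_eval] using (taylor_isLittleO (convex_Ico 0 ε)
      (Set.left_mem_Ico.2 hε) hY).mono (nhdsWithin_le_of_mem (Ico_mem_nhdsGT hε))
  have hDefect : (fun x => (X ^ (ℓ + 1) * conjugationDefect ℓ Q g).eval x) =o[𝓝[>] 0]
      fun x => x ^ (ℓ + r) := by
    refine (isLittleO_eval_of_X_pow_succ_dvd ?_).mono nhdsWithin_le_nhds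
    rw [add_right_comm, pow_add]
    exact mul_dvd_mul_left _ hdvd
  have hBounded : (fun x => (derivative (X * g)).eval x) =O[𝓝[>] 0] fun _ => (1 : ℝ) :=
    (((derivative (X * g)).continuous.tendsto 0).isBigO_one ℝ).mono nhdsWithin_le_nhds
  have hRemainder := hBounded.mul_isLittleO hTaylor
  simp only [one_mul] at hRemainder
  refine (hRemainder.add hDefect).congr_left fun x => ?_
  rw [X_pow_mul_conjugationDefect]
  simp only [eval_sub, eval_mul, eval_pow]
  ring
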